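/- Let Z ~ Bernoulli(p) and W = α(Z - p) for a real constant α. Then E|X_n² - E[X_n²]|³ ≤ 34.5·α⁶·p(1-p)·n³, where X_n = Σ_{i=1}^n W_i with W_i i.i.d. copies of W. -/

import Mathlib

open MeasureTheory ProbabilityTheory Finset

/-!
For `Y = Xₙ² ≥ 0` and `m = E Y ≥ 0` we have `|Y - m| ≤ Y + m`, so
`E|Y - m|³ ≤ E[(Y - m)² (Y + m)] = E Y³ - m E Y² ≤ E Xₙ⁶`.
Adding one summand at a time and expanding `(Wⱼ + S)ᵏ` binomially, with `Wⱼ` independent of the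
partial sum `S` and `M₁ = 0`, expresses `E Xₙ⁶` through the moments `M k` of a single summand:
`n M₆ + (30 M₄ M₂ + 20 M₃²) C(n, 2) + 90 M₂³ C(n, 3)`. For the centered Bernoulli law, with
`q = p (1 - p) ≤ 1/4`, one has `M₂ = α² q`, `M₆ ≤ α⁶ q` and `M₄ M₂, M₃² ≤ α⁶ q²`.
-/

section

variable {Ω : Type*} [MeasurableSpace Ω] {μ : Measure Ω}

theorem ProbabilityTheory.IndepFun.integrable_add_pow {X Y : Ω → ℝ} (hXY : IndepFun X Y μ)
    (hX : ∀ k : ℕ, Integrable (fun ω => X ω ^ k) μ)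
    (hY : ∀ k : ℕ, Integrable (fun ω => Y ω ^ k) μ) (k : ℕ) :
    Integrable (fun ω => (X ω + Y ω) ^ k) μ := by
  simp_rw [add_pow]
  refine integrable_finsetSum _ fun m _ => Integrable.mul_const ?_ _
  exact (hXY.comp (measurable_id.pow_const m) (measurable_id.pow_const (k - m))).integrable_mul
    (hX m) (hY (k - m))

theorem ProbabilityTheory.IndepFun.integral_add_pow {X Y : Ω → ℝ} (hXY : IndepFun X Y μ)
    (hX : ∀ k : ℕ, Integrable (fun ω => X ω ^ k) μ)
    (hY : ∀ k : ℕ, Integrable (fun ω => Y ω ^ k) μ) (k : ℕ) :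
    ∫ ω, (X ω + Y ω) ^ k ∂μ
      = ∑ m ∈ range (k + 1), (∫ ω, X ω ^ m ∂μ) * (∫ ω, Y ω ^ (k - m) ∂μ) * k.choose m := by
  have hXY' (m : ℕ) : IndepFun (fun ω => X ω ^ m) (fun ω => Y ω ^ (k - m)) μ :=
    hXY.comp (measurable_id.pow_const m) (measurable_id.pow_const (k - m))
  have hint (m : ℕ) : Integrable (fun ω => X ω ^ m * Y ω ^ (k - m)) μ :=
    (hXY' m).integrable_mul (hX m) (hY (k - m))
  simp_rw [add_pow]
  rw [integral_finsetSum _ fun m _ => (hint m).mul_const _]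
  refine sum_congr rfl fun m _ => ?_
  rw [integral_mul_const, (hXY' m).integral_fun_mul_eq_mul_integral
    (hX m).aestronglyMeasurable (hY (k - m)).aestronglyMeasurable]

theorem integral_abs_sub_integral_pow_three_le [IsProbabilityMeasure μ] {Y : Ω → ℝ}
    (hY : 0 ≤ᵐ[μ] Y) (hY1 : Integrable Y μ) (hY2 : Integrable (fun ω => Y ω ^ 2) μ)
    (hY3 : Integrable (fun ω => Y ω ^ 3) μ) :
    ∫ ω, |Y ω - ∫ ω', Y ω' ∂μ| ^ 3 ∂μ ≤ ∫ ω, Y ω ^ 3 ∂μ := by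
  set m := ∫ ω, Y ω ∂μ
  have hm : 0 ≤ m := integral_nonneg_of_ae hY
  have hpt : ∀ y : ℝ, 0 ≤ y → |y - m| ^ 3 ≤ y ^ 3 - m * y ^ 2 - m ^ 2 * (y - m) := fun y hy => by
    have h : |y - m| ≤ y + m := abs_le.2 ⟨by linarith, by linarith⟩
    calc |y - m| ^ 3 = (y - m) ^ 2 * |y - m| := by rw [pow_succ, sq_abs]
      _ ≤ (y - m) ^ 2 * (y + m) := by gcongr
      _ = _ := by ring
  have hint32 : Integrable (fun ω => Y ω ^ 3 - m * Y ω ^ 2) μ := hY3.sub (hY2.const_mul m)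
  have hint1 : Integrable (fun ω => Y ω - m) μ := hY1.sub (integrable_const m)
  have hint : Integrable (fun ω => Y ω ^ 3 - m * Y ω ^ 2 - m ^ 2 * (Y ω - m)) μ :=
    hint32.sub (hint1.const_mul _)
  calc ∫ ω, |Y ω - m| ^ 3 ∂μ
      ≤ ∫ ω, (Y ω ^ 3 - m * Y ω ^ 2 - m ^ 2 * (Y ω - m)) ∂μ :=
        integral_mono_of_nonneg (.of_forall fun _ => by positivity) hint
          (hY.mono fun ω hω => hpt _ hω)
    _ = ∫ ω, Y ω ^ 3 ∂μ - m * ∫ ω, Y ω ^ 2 ∂μ := by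
        rw [integral_sub hint32 (hint1.const_mul _), integral_sub hY3 (hY2.const_mul m),
          integral_const_mul, integral_const_mul, integral_sub hY1 (integrable_const m)]
        simp [m]
    _ ≤ ∫ ω, Y ω ^ 3 ∂μ := by
        have : 0 ≤ ∫ ω, Y ω ^ 2 ∂μ := integral_nonneg fun ω => sq_nonneg _
        nlinarith

def sixthMomentOfSum (M : ℕ → ℝ) (N : ℕ) : ℝ :=
  N * M 6 + (30 * M 4 * M 2 + 20 * M 3 ^ 2) * N.choose 2 + 90 * N.choose 3 * M 2 ^ 3

section CommonMoments

variable {ι : Type*} {W : ι → Ω → ℝ} {M : ℕ → ℝ}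

theorem ProbabilityTheory.iIndepFun.indepFun_fun_finsetSum_of_notMem (hindep : iIndepFun W μ)
    (hmeas : ∀ i, Measurable (W i)) {s : Finset ι} {j : ι} (hj : j ∉ s) :
    IndepFun (W j) (fun ω => ∑ i ∈ s, W i ω) μ := by
  rw [← Finset.sum_fn]
  exact (hindep.indepFun_finsetSum_of_notMem hmeas hj).symm

theorem integral_sum_eq_zero (hint : ∀ i k, Integrable (fun ω => W i ω ^ k) μ)
    (hmom : ∀ i k, ∫ ω, W i ω ^ k ∂μ = M k) (hM1 : M 1 = 0) (s : Finset ι) :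
    ∫ ω, ∑ i ∈ s, W i ω ∂μ = 0 := by
  rw [integral_finsetSum _ fun i _ => by simpa using hint i 1]
  exact sum_eq_zero fun i _ => by simpa [hM1] using hmom i 1

variable [IsProbabilityMeasure μ]

theorem integral_sum_pow_zero (s : Finset ι) : ∫ ω, (∑ i ∈ s, W i ω) ^ 0 ∂μ = 1 := by
  simp

theorem integrable_sum_pow (hindep : iIndepFun W μ) (hmeas : ∀ i, Measurable (W i))
    (hint : ∀ i k, Integrable (fun ω => W i ω ^ k) μ) (s : Finset ι) (k : ℕ) :
    Integrable (fun ω => (∑ i ∈ s, W i ω) ^ k) μ := by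
  induction s using Finset.cons_induction generalizing k with
  | empty => simp
  | cons j s hj ih =>
    simpa only [sum_cons] using
      (hindep.indepFun_fun_finsetSum_of_notMem hmeas hj).integrable_add_pow (hint j) ih k

theorem integral_sum_cons_pow (hindep : iIndepFun W μ) (hmeas : ∀ i, Measurable (W i))
    (hint : ∀ i k, Integrable (fun ω => W i ω ^ k) μ) (hmom : ∀ i k, ∫ ω, W i ω ^ k ∂μ = M k)
    {s : Finset ι} {j : ι} (hj : j ∉ s) (k : ℕ) :
    ∫ ω, (∑ i ∈ cons j s hj, W i ω) ^ k ∂μ = ∫ ω, (∑ i ∈ s, W i ω) ^ k ∂μ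
      + ∑ m ∈ range k,
          M (m + 1) * (∫ ω, (∑ i ∈ s, W i ω) ^ (k - (m + 1)) ∂μ) * k.choose (m + 1) := by
  simp only [sum_cons]
  rw [(hindep.indepFun_fun_finsetSum_of_notMem hmeas hj).integral_add_pow (hint j)
    (integrable_sum_pow hindep hmeas hint s) k, sum_range_succ']
  simp [hmom, add_comm]

theorem integral_sum_sq (hindep : iIndepFun W μ) (hmeas : ∀ i, Measurable (W i))
    (hint : ∀ i k, Integrable (fun ω => W i ω ^ k) μ) (hmom : ∀ i k, ∫ ω, W i ω ^ k ∂μ = M k)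
    (hM1 : M 1 = 0) (s : Finset ι) :
    ∫ ω, (∑ i ∈ s, W i ω) ^ 2 ∂μ = #s * M 2 := by
  induction s using Finset.cons_induction with
  | empty => simp
  | cons j s hj ih =>
    rw [integral_sum_cons_pow hindep hmeas hint hmom hj]
    simp only [sum_range_succ, sum_range_zero, ih, hM1, integral_sum_eq_zero hint hmom hM1,
      integral_sum_pow_zero, pow_one, card_cons, Nat.choose, Nat.reduceAdd, Nat.reduceSub]
    push_cast
    ring

theorem integral_sum_pow_three (hindep : iIndepFun W μ) (hmeas : ∀ i, Measurable (W i))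
    (hint : ∀ i k, Integrable (fun ω => W i ω ^ k) μ) (hmom : ∀ i k, ∫ ω, W i ω ^ k ∂μ = M k)
    (hM1 : M 1 = 0) (s : Finset ι) :
    ∫ ω, (∑ i ∈ s, W i ω) ^ 3 ∂μ = #s * M 3 := by
  induction s using Finset.cons_induction with
  | empty => simp
  | cons j s hj ih =>
    rw [integral_sum_cons_pow hindep hmeas hint hmom hj]
    simp only [sum_range_succ, sum_range_zero, ih, hM1, integral_sum_eq_zero hint hmom hM1,
      integral_sum_pow_zero, pow_one, card_cons, Nat.choose, Nat.reduceAdd, Nat.reduceSub]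
    push_cast
    ring

theorem integral_sum_pow_four (hindep : iIndepFun W μ) (hmeas : ∀ i, Measurable (W i))
    (hint : ∀ i k, Integrable (fun ω => W i ω ^ k) μ) (hmom : ∀ i k, ∫ ω, W i ω ^ k ∂μ = M k)
    (hM1 : M 1 = 0) (s : Finset ι) :
    ∫ ω, (∑ i ∈ s, W i ω) ^ 4 ∂μ = #s * M 4 + 6 * (#s).choose 2 * M 2 ^ 2 := by
  induction s using Finset.cons_induction with
  | empty => simp
  | cons j s hj ih =>
    rw [integral_sum_cons_pow hindep hmeas hint hmom hj]
    simp only [sum_range_succ, sum_range_zero, ih, hM1, integral_sum_eq_zero hint hmom hM1,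
      integral_sum_sq hindep hmeas hint hmom hM1, integral_sum_pow_zero, pow_one, card_cons,
      Nat.choose, Nat.choose_one_right, Nat.reduceAdd, Nat.reduceSub]
    push_cast
    ring

theorem integral_sum_pow_six (hindep : iIndepFun W μ) (hmeas : ∀ i, Measurable (W i))
    (hint : ∀ i k, Integrable (fun ω => W i ω ^ k) μ) (hmom : ∀ i k, ∫ ω, W i ω ^ k ∂μ = M k)
    (hM1 : M 1 = 0) (s : Finset ι) :
    ∫ ω, (∑ i ∈ s, W i ω) ^ 6 ∂μ = sixthMomentOfSum M #s := by
  induction s using Finset.cons_induction with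
  | empty => simp [sixthMomentOfSum]
  | cons j s hj ih =>
    rw [integral_sum_cons_pow hindep hmeas hint hmom hj]
    simp only [sum_range_succ, sum_range_zero, ih, hM1, integral_sum_eq_zero hint hmom hM1,
      integral_sum_sq hindep hmeas hint hmom hM1, integral_sum_pow_three hindep hmeas hint hmom hM1,
      integral_sum_pow_four hindep hmeas hint hmom hM1, integral_sum_pow_zero, pow_one, card_cons,
      sixthMomentOfSum, Nat.choose, Nat.choose_one_right, Nat.reduceAdd, Nat.reduceSub]
    push_cast
    ring

end CommonMoments

section TwoPointLaw

variable {β : Type*} [MeasurableSpace β] [MeasurableSingletonClass β] {X : Ω → β} {p : ℝ} {a b : β}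
  {g : β → ℝ}

theorem integrable_comp_of_map_eq_two_point (hX : AEMeasurable X μ)
    (hlaw : μ.map X = ENNReal.ofReal p • Measure.dirac a + ENNReal.ofReal (1 - p) • Measure.dirac b)
    (hg : Measurable g) : Integrable (fun ω => g (X ω)) μ := by
  have hgd (c : β) : Integrable g (Measure.dirac c) := integrable_dirac enorm_lt_top
  refine (integrable_map_measure hg.aestronglyMeasurable hX).1 ?_
  rw [hlaw]
  exact ((hgd a).smul_measure ENNReal.ofReal_ne_top).add_measure
    ((hgd b).smul_measure ENNReal.ofReal_ne_top)

theorem integral_comp_of_map_eq_two_point (hX : AEMeasurable X μ) (hp0 : 0 ≤ p) (hp1 : p ≤ 1)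
    (hlaw : μ.map X = ENNReal.ofReal p • Measure.dirac a + ENNReal.ofReal (1 - p) • Measure.dirac b)
    (hg : Measurable g) : ∫ ω, g (X ω) ∂μ = p * g a + (1 - p) * g b := by
  have hgd (c : β) : Integrable g (Measure.dirac c) := integrable_dirac enorm_lt_top
  rw [← integral_map hX hg.aestronglyMeasurable, hlaw,
    integral_add_measure ((hgd a).smul_measure ENNReal.ofReal_ne_top)
      ((hgd b).smul_measure ENNReal.ofReal_ne_top),
    integral_smul_measure, integral_smul_measure, integral_dirac, integral_dirac,
    ENNReal.toReal_ofReal hp0, ENNReal.toReal_ofReal (sub_nonneg.2 hp1), smul_eq_mul, smul_eq_mul]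

end TwoPointLaw

def centeredBernoulliMoment (α p : ℝ) (k : ℕ) : ℝ :=
  p * (α * (1 - p)) ^ k + (1 - p) * (-(α * p)) ^ k

theorem centeredBernoulliMoment_one (α p : ℝ) : centeredBernoulliMoment α p 1 = 0 := by
  simp only [centeredBernoulliMoment]
  ring

theorem sixthMomentOfSum_centeredBernoulliMoment_le (α : ℝ) {p : ℝ} (hp0 : 0 ≤ p) (hp1 : p ≤ 1)
    (N : ℕ) :
    sixthMomentOfSum (centeredBernoulliMoment α p) N ≤ 34.5 * α ^ 6 * (p * (1 - p)) * N ^ 3 := by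
  set q := p * (1 - p) with hq
  have hq0 : 0 ≤ q := mul_nonneg hp0 (sub_nonneg.2 hp1)
  have hq4 : q ≤ 1 / 4 := by nlinarith [sq_nonneg (1 - 2 * p)]
  have hα : 0 ≤ α ^ 6 := by positivity
  have hM6 : centeredBernoulliMoment α p 6 ≤ α ^ 6 * q := by
    have : centeredBernoulliMoment α p 6 = α ^ 6 * q * (1 - 5 * q + 5 * q ^ 2) := by
      simp only [centeredBernoulliMoment, hq]; ring
    rw [this]
    nlinarith [mul_nonneg (mul_nonneg hα hq0) hq0]
  have hM432 : 30 * centeredBernoulliMoment α p 4 * centeredBernoulliMoment α p 2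
      + 20 * centeredBernoulliMoment α p 3 ^ 2 ≤ 50 * α ^ 6 * q ^ 2 := by
    have : 30 * centeredBernoulliMoment α p 4 * centeredBernoulliMoment α p 2
        + 20 * centeredBernoulliMoment α p 3 ^ 2 = α ^ 6 * q ^ 2 * (50 - 170 * q) := by
      simp only [centeredBernoulliMoment, hq]; ring
    rw [this]
    nlinarith [mul_nonneg hα (pow_nonneg hq0 3)]
  have hM2 : centeredBernoulliMoment α p 2 ^ 3 = α ^ 6 * q ^ 3 := by
    simp only [centeredBernoulliMoment, hq]; ring
  have hC2 : (N.choose 2 : ℝ) ≤ N ^ 2 / 2 := by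
    simpa [Nat.factorial] using Nat.choose_le_pow_div (α := ℝ) 2 N
  have hC3 : (N.choose 3 : ℝ) ≤ N ^ 3 / 6 := by
    simpa [Nat.factorial] using Nat.choose_le_pow_div (α := ℝ) 3 N
  have hN : (N : ℝ) ≤ N ^ 3 ∧ (N : ℝ) ^ 2 ≤ N ^ 3 := by
    rcases N.eq_zero_or_pos with rfl | hN
    · simp
    · have : (1 : ℝ) ≤ N := by exact_mod_cast hN
      constructor <;> nlinarith
  have hpoly : N + 25 * q * N ^ 2 + 15 * q ^ 2 * N ^ 3 ≤ 34.5 * (N : ℝ) ^ 3 := by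
    nlinarith [mul_le_mul_of_nonneg_left hq4 (pow_nonneg N.cast_nonneg 2),
      mul_le_mul_of_nonneg_left (mul_le_mul hq4 hq4 hq0 (by norm_num)) (pow_nonneg N.cast_nonneg 3)]
  rw [sixthMomentOfSum, hM2]
  calc N * centeredBernoulliMoment α p 6
        + (30 * centeredBernoulliMoment α p 4 * centeredBernoulliMoment α p 2
          + 20 * centeredBernoulliMoment α p 3 ^ 2) * N.choose 2 + 90 * N.choose 3 * (α ^ 6 * q ^ 3)
      ≤ N * (α ^ 6 * q) + 50 * α ^ 6 * q ^ 2 * (N ^ 2 / 2) + 90 * (N ^ 3 / 6) * (α ^ 6 * q ^ 3) :=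
        by gcongr
    _ = α ^ 6 * q * (N + 25 * q * N ^ 2 + 15 * q ^ 2 * N ^ 3) := by ring
    _ ≤ α ^ 6 * q * (34.5 * N ^ 3) := by gcongr
    _ = 34.5 * α ^ 6 * q * N ^ 3 := by ring

end

theorem third_central_moment_of_square_sum_bernoulli_general
    {Ω : Type*} [MeasurableSpace Ω] (μ : Measure Ω) [IsProbabilityMeasure μ]
    (n : ℕ) (α p : ℝ) (hp0 : 0 ≤ p) (hp1 : p ≤ 1)
    (W : Fin n → Ω → ℝ)
    (hWmeas : ∀ i, Measurable (W i))
    (hindep : iIndepFun W μ)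
    (hlaw : ∀ i, Measure.map (W i) μ
      = (ENNReal.ofReal p) • Measure.dirac (α * (1 - p))
        + (ENNReal.ofReal (1 - p)) • Measure.dirac (-(α * p))) :
    ∫ ω, |(∑ i, W i ω) ^ 2 - ∫ ω', (∑ i, W i ω') ^ 2 ∂μ| ^ 3 ∂μ
      ≤ 34.5 * α ^ 6 * (p * (1 - p)) * n ^ 3 := by
  have hint (i : Fin n) (k : ℕ) : Integrable (fun ω => W i ω ^ k) μ :=
    integrable_comp_of_map_eq_two_point (hWmeas i).aemeasurable (hlaw i)
      (measurable_id.pow_const k)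
  have hmom (i : Fin n) (k : ℕ) : ∫ ω, W i ω ^ k ∂μ = centeredBernoulliMoment α p k :=
    integral_comp_of_map_eq_two_point (hWmeas i).aemeasurable hp0 hp1 (hlaw i)
      (measurable_id.pow_const k)
  have hM1 := centeredBernoulliMoment_one α p
  have hS := integrable_sum_pow hindep hWmeas hint univ
  calc ∫ ω, |(∑ i, W i ω) ^ 2 - ∫ ω', (∑ i, W i ω') ^ 2 ∂μ| ^ 3 ∂μ
      ≤ ∫ ω, ((∑ i, W i ω) ^ 2) ^ 3 ∂μ :=
        integral_abs_sub_integral_pow_three_le (.of_forall fun _ => sq_nonneg _) (hS 2)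
          (by simpa only [← pow_mul] using hS 4) (by simpa only [← pow_mul] using hS 6)
    _ = ∫ ω, (∑ i, W i ω) ^ 6 ∂μ := by simp only [← pow_mul]
    _ ≤ 34.5 * α ^ 6 * (p * (1 - p)) * n ^ 3 := by
        rw [integral_sum_pow_six hindep hWmeas hint hmom hM1, card_univ, Fintype.card_fin]
        exact sixthMomentOfSum_centeredBernoulliMoment_le α hp0 hp1 n

/-- Let `W = α (Z - p)` with `Z ~ Bernoulli(p)`, and `W 1, ..., W n`
i.i.d. copies of `W`, `Xₙ = ∑ i, W i`. Then
`E|Xₙ² - E[Xₙ²]|³ ≤ 34.5 · α⁶ · p(1-p) · n³`.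
The common law of the `W i` is the two-point law placing mass `p` at `α(1-p)`
and mass `1-p` at `-αp`. -/
theorem third_central_moment_of_square_sum_bernoulli
    {Ω : Type*} [MeasurableSpace Ω] (μ : Measure Ω) [IsProbabilityMeasure μ]
    (n : ℕ) (hn : 0 < n) (α p : ℝ) (hp0 : 0 ≤ p) (hp1 : p ≤ 1)
    (W : Fin n → Ω → ℝ)
    (hWmeas : ∀ i, Measurable (W i))
    (hindep : iIndepFun W μ)
    (hlaw : ∀ i, Measure.map (W i) μ
      = (ENNReal.ofReal p) • Measure.dirac (α * (1 - p))
        + (ENNReal.ofReal (1 - p)) • Measure.dirac (-(α * p))) :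
    ∫ ω, |(∑ i, W i ω) ^ 2 - ∫ ω', (∑ i, W i ω') ^ 2 ∂μ| ^ 3 ∂μ
      ≤ 34.5 * α ^ 6 * (p * (1 - p)) * n ^ 3 :=
  third_central_moment_of_square_sum_bernoulli_general μ n α p hp0 hp1 W hWmeas hindep hlaw
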